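/- For every T ∈ ℕ, the connecting operator C^T = (W^T)ᵀW^T is positive definite and its entries admit the representation in terms of the response vector: C^T_{ij} = Σ_{k=0}^{T−max(i,j)} r_{|i−j|+2k} for 1 ≤ i,j ≤ T, where r_0 = 1. -/

import Mathlib

/-!
The columns of `W^T` are time-delayed copies of the response `u^δ` to the impulse. By finite
propagation speed (`u^δ_{n,t} = 0` for `t < n`) the matrix `W^T` is triangular up to reversing its
columns, with diagonal entries `a_0 ⋯ a_n ≠ 0`; hence it is invertible and `C^T = (W^T)ᵀ W^T` is
positive definite.

The entry `C^T_{ij}` is the inner product of the states `u^δ_{·,T-i}` and `u^δ_{·,T-j}`. Since the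
Jacobi matrix is symmetric, this inner product satisfies the discrete wave equation in its two time
variables, and its boundary values are read off from `r`. The sums of the `r_{|i-j|+2k}` satisfy
the same equation with the same boundary values, so the two coincide.
-/

open scoped BigOperators
open Matrix

/-- Solution `u^f` of the semi-infinite dynamical system. -/
def solS (a b f : ℕ → ℝ) : ℕ → ℕ → ℝ
  | n, 0 => if n = 0 then f 0 else 0
  | n, 1 =>
      if n = 0 then f 1
      else a n * solS a b f (n + 1) 0 + a (n - 1) * solS a b f (n - 1) 0
        + b n * solS a b f n 0
  | n, t + 2 =>
      if n = 0 then f (t + 2)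
      else a n * solS a b f (n + 1) (t + 1) + a (n - 1) * solS a b f (n - 1) (t + 1)
        + b n * solS a b f n (t + 1) - solS a b f n t
  termination_by n t => t

/-- Extension of a finite control by zero. -/
def ctrl (T : ℕ) (f : Fin T → ℝ) : ℕ → ℝ := fun t => if h : t < T then f ⟨t, h⟩ else 0

/-- The control `δ = (1,0,0,…)`. -/
def dctrl : ℕ → ℝ := fun t => if t = 0 then 1 else 0

/-- The response vector: `r_{t-1} = u^δ_{1,t}`, i.e. `respVec a b t = u^δ_{1,t+1}`. -/
def respVec (a b : ℕ → ℝ) : ℕ → ℝ := fun t => solS a b dctrl 1 (t + 1)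

/-- The control operator `W^T : ℝ^T → ℝ^T` as a matrix. -/
def WSemiMat (a b : ℕ → ℝ) (T : ℕ) : Matrix (Fin T) (Fin T) ℝ :=
  Matrix.of fun n j => solS a b (ctrl T (fun k => if k = j then 1 else 0)) ((n : ℕ) + 1) T

/-- Connecting operator `C^T = (W^T)ᵀ W^T`. -/
def CSemiMat (a b : ℕ → ℝ) (T : ℕ) : Matrix (Fin T) (Fin T) ℝ :=
  (WSemiMat a b T)ᵀ * WSemiMat a b T

section Solution

variable (a b f : ℕ → ℝ)

theorem solS_zero (t : ℕ) : solS a b f 0 t = f t := by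
  match t with
  | 0 | 1 | _ + 2 => rw [solS]; simp

theorem solS_succ_zero (n : ℕ) : solS a b f (n + 1) 0 = 0 := by
  conv_lhs => rw [solS]
  simp

theorem solS_succ_one (n : ℕ) :
    solS a b f (n + 1) 1 = a (n + 1) * solS a b f (n + 2) 0 + a n * solS a b f n 0
      + b (n + 1) * solS a b f (n + 1) 0 := by
  conv_lhs => rw [solS]
  simp

theorem solS_succ_add_two (n t : ℕ) :
    solS a b f (n + 1) (t + 2) = a (n + 1) * solS a b f (n + 2) (t + 1)
      + a n * solS a b f n (t + 1) + b (n + 1) * solS a b f (n + 1) (t + 1)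
      - solS a b f (n + 1) t := by
  conv_lhs => rw [solS]
  simp

end Solution

structure SolvesSystem (a b f : ℕ → ℝ) (v : ℕ → ℕ → ℝ) : Prop where
  boundary : ∀ t, v 0 t = f t
  initial : ∀ n, v (n + 1) 0 = 0
  step_one : ∀ n, v (n + 1) 1 = a (n + 1) * v (n + 2) 0 + a n * v n 0 + b (n + 1) * v (n + 1) 0
  step : ∀ n t, v (n + 1) (t + 2) = a (n + 1) * v (n + 2) (t + 1) + a n * v n (t + 1)
    + b (n + 1) * v (n + 1) (t + 1) - v (n + 1) t

namespace SolvesSystem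

variable {a b f : ℕ → ℝ} {v : ℕ → ℕ → ℝ}

theorem eq_solS (hv : SolvesSystem a b f v) : v = solS a b f := by
  funext n t
  induction t using Nat.strong_induction_on generalizing n with
  | _ t ih =>
    match n, t with
    | 0, t => rw [hv.boundary, solS_zero]
    | n + 1, 0 => rw [hv.initial, solS_succ_zero]
    | n + 1, 1 => simp only [hv.step_one, solS_succ_one, ih 0 zero_lt_one]
    | n + 1, t + 2 =>
      simp only [hv.step, solS_succ_add_two, ih (t + 1) (by omega), ih t (by omega)]

end SolvesSystem

section Propagation

variable (a b f : ℕ → ℝ)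

theorem solS_succ_eq_zero_of_le {n t : ℕ} (h : t ≤ n) : solS a b f (n + 1) t = 0 := by
  induction t using Nat.strong_induction_on generalizing n with
  | _ t ih =>
    match n, t with
    | _, 0 => exact solS_succ_zero a b f _
    | n + 1, 1 => simp only [solS_succ_one, solS_succ_zero]; ring
    | n + 1, t + 2 =>
      have h1 : solS a b f (n + 1 + 2) (t + 1) = 0 := ih (t + 1) (by omega) (by omega)
      have h2 : solS a b f (n + 1) (t + 1) = 0 := ih (t + 1) (by omega) (by omega)
      have h3 : solS a b f (n + 1 + 1) (t + 1) = 0 := ih (t + 1) (by omega) (by omega)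
      have h4 : solS a b f (n + 1 + 1) t = 0 := ih t (by omega) (by omega)
      rw [solS_succ_add_two, h1, h2, h3, h4]
      ring

theorem solS_succ_self (n : ℕ) :
    solS a b f (n + 1) (n + 1) = (∏ i ∈ Finset.range (n + 1), a i) * f 0 := by
  induction n with
  | zero => simp [solS_succ_one, solS_succ_zero, solS_zero]
  | succ n ih =>
    rw [solS_succ_add_two, solS_succ_eq_zero_of_le a b f (by omega : n + 1 ≤ n + 2),
      solS_succ_eq_zero_of_le a b f (le_refl (n + 1)),
      solS_succ_eq_zero_of_le a b f (by omega : n ≤ n + 1), ih, Finset.prod_range_succ _ (n + 1)]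
    ring

theorem solS_delay (j : ℕ) (n t : ℕ) :
    solS a b (fun s => if j ≤ s then f (s - j) else 0) n t
      = if j ≤ t then solS a b f n (t - j) else 0 := by
  have hv : SolvesSystem a b (fun s => if j ≤ s then f (s - j) else 0)
      (fun n t => if j ≤ t then solS a b f n (t - j) else 0) := by
    refine ⟨?_, ?_, ?_, ?_⟩
    · intro t
      split_ifs <;> simp [solS_zero]
    · intro n
      split_ifs <;> simp [solS_succ_zero]
    · intro n
      rcases Nat.lt_or_ge j 2 with hj | hj
      · interval_cases j <;> simp [solS_succ_one, solS_succ_zero]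
      · simp [show ¬ j ≤ 1 by omega, show ¬ j ≤ 0 by omega]
    · intro n t
      rcases Nat.lt_or_ge (t + 2) j with hj | hj
      · simp [show ¬ j ≤ t + 2 by omega, show ¬ j ≤ t + 1 by omega, show ¬ j ≤ t by omega]
      obtain hj | rfl | rfl : j ≤ t ∨ j = t + 1 ∨ j = t + 2 := by omega
      · simp only [hj, show j ≤ t + 1 by omega, show j ≤ t + 2 by omega, if_true,
          show t + 2 - j = t - j + 2 by omega, show t + 1 - j = t - j + 1 by omega,
          solS_succ_add_two]
      · simp [solS_succ_one]
      · simp [solS_succ_zero]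
  rw [← hv.eq_solS]

end Propagation

section ControlOperator

variable (a b : ℕ → ℝ)

theorem ctrl_indicator (T : ℕ) (j : Fin T) :
    ctrl T (fun k => if k = j then 1 else 0)
      = fun s => if (j : ℕ) ≤ s then dctrl (s - j) else 0 := by
  funext s
  have hj := j.isLt
  by_cases hs : s < T
  · simp only [ctrl, dctrl, hs, dif_pos, Fin.ext_iff]
    split_ifs <;> first | rfl | (exfalso; omega)
  · simp only [ctrl, dctrl, hs, dif_neg, not_false_eq_true]
    split_ifs <;> first | rfl | (exfalso; omega)

theorem WSemiMat_apply (T : ℕ) (n j : Fin T) :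
    WSemiMat a b T n j = solS a b dctrl (n + 1) (T - j) := by
  rw [WSemiMat, of_apply, ctrl_indicator, solS_delay, if_pos j.isLt.le]

theorem respVec_zero : respVec a b 0 = a 0 := by
  rw [respVec]
  simpa [dctrl] using solS_succ_self a b dctrl 0

/-- Reversing the columns of `W^T` gives an upper triangular matrix, by finite propagation speed. -/
theorem det_WSemiMat_ne_zero (ha : ∀ n, a n ≠ 0) (T : ℕ) : (WSemiMat a b T).det ≠ 0 := by
  have hrev : (WSemiMat a b T).submatrix id Fin.revPerm
      = of fun n j : Fin T => solS a b dctrl (n + 1) (j + 1) := by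
    ext n j
    simp only [submatrix_apply, id, Fin.revPerm_apply, WSemiMat_apply, of_apply, Fin.val_rev]
    congr 1
    omega
  have htri : ((WSemiMat a b T).submatrix id Fin.revPerm).IsUpperTriangular := by
    intro n j hjn
    rw [hrev, of_apply]
    exact solS_succ_eq_zero_of_le a b dctrl (Nat.succ_le_of_lt hjn)
  have hdiag : ∏ n : Fin T, solS a b dctrl (n + 1) (n + 1) ≠ 0 :=
    Finset.prod_ne_zero_iff.mpr fun n _ => by
      simp [solS_succ_self, dctrl, Finset.prod_ne_zero_iff, ha]
  have hdet := det_permute' Fin.revPerm (WSemiMat a b T)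
  rw [det_of_isUpperTriangular htri, hrev] at hdet
  exact fun h0 => hdiag (by simpa [h0] using hdet)

theorem CSemiMat_posDef (ha : ∀ n, a n ≠ 0) (T : ℕ) : (CSemiMat a b T).PosDef := by
  have hinj : Function.Injective (WSemiMat a b T).mulVec :=
    mulVec_injective_iff_isUnit.mpr ((isUnit_iff_isUnit_det _).mpr
      (det_WSemiMat_ne_zero a b ha T).isUnit)
  simpa [CSemiMat, conjTranspose_eq_transpose_of_trivial] using PosDef.conjTranspose_mul_self _ hinj

end ControlOperator

theorem eq_of_discrete_wave {F G : ℕ → ℕ → ℝ}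
    (hF : ∀ s t, F (s + 2) (t + 1) + F s (t + 1) = F (s + 1) (t + 2) + F (s + 1) t)
    (hG : ∀ s t, G (s + 2) (t + 1) + G s (t + 1) = G (s + 1) (t + 2) + G (s + 1) t)
    (h_zero : ∀ t, F 0 t = G 0 t) (h_one : ∀ t, F 1 t = G 1 t) (h_left : ∀ s, F s 0 = G s 0) :
    F = G := by
  funext s t
  induction s using Nat.strong_induction_on generalizing t with
  | _ s ih =>
    match s, t with
    | 0, t => exact h_zero t
    | 1, t => exact h_one t
    | s + 2, 0 => exact h_left (s + 2)
    | s + 2, t + 1 =>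
      rw [eq_sub_of_add_eq (hF s t), eq_sub_of_add_eq (hG s t), ih (s + 1) (by omega),
        ih (s + 1) (by omega), ih s (by omega)]

section Gram

variable (a b : ℕ → ℝ)

/-- Inner product of the states `u^δ_{·,s}` and `u^δ_{·,t}`; truncating at `n = s` loses nothing
since `u^δ_{n+1,s} = 0` for `n ≥ s`. -/
noncomputable def waveGram (s t : ℕ) : ℝ :=
  ∑ n ∈ Finset.range s, solS a b dctrl (n + 1) s * solS a b dctrl (n + 1) t

theorem sum_range_solS_mul_solS_eq_waveGram {s N : ℕ} (t : ℕ) (h : s ≤ N) :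
    ∑ n ∈ Finset.range N, solS a b dctrl (n + 1) s * solS a b dctrl (n + 1) t
      = waveGram a b s t := by
  refine (Finset.sum_subset (Finset.range_subset_range.2 h) fun n _ hns => ?_).symm
  rw [solS_succ_eq_zero_of_le a b dctrl (by simpa using hns), zero_mul]

theorem CSemiMat_apply (T : ℕ) (i j : Fin T) :
    CSemiMat a b T i j = waveGram a b (T - i) (T - j) := by
  simp only [CSemiMat, mul_apply, transpose_apply, WSemiMat_apply]
  rw [Fin.sum_univ_eq_sum_range
    (fun n => solS a b dctrl (n + 1) (T - i) * solS a b dctrl (n + 1) (T - j)) T]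
  exact sum_range_solS_mul_solS_eq_waveGram a b _ (Nat.sub_le T i)

/-- Symmetry of the Jacobi matrix, as a shift of summation index; the boundary terms vanish
since `δ_{p+1} = 0` and `u^δ_{N,p+1} = 0`. -/
theorem sum_range_a_mul_solS_shift {p N : ℕ} (q : ℕ) (h : p + 2 ≤ N) :
    ∑ n ∈ Finset.range N, a n * solS a b dctrl n (p + 1) * solS a b dctrl (n + 1) (q + 1)
      = ∑ n ∈ Finset.range N,
          a (n + 1) * solS a b dctrl (n + 1) (p + 1) * solS a b dctrl (n + 2) (q + 1) := by
  obtain ⟨M, rfl⟩ : ∃ M, N = M + 1 := ⟨N - 1, by omega⟩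
  rw [Finset.sum_range_succ', Finset.sum_range_succ, solS_zero,
    solS_succ_eq_zero_of_le a b dctrl (by omega : p + 1 ≤ M)]
  simp [dctrl]

theorem waveGram_wave (s t : ℕ) :
    waveGram a b (s + 2) (t + 1) + waveGram a b s (t + 1)
      = waveGram a b (s + 1) (t + 2) + waveGram a b (s + 1) t := by
  have hN {r : ℕ} (t' : ℕ) (hr : r ≤ s + t + 3) :=
    sum_range_solS_mul_solS_eq_waveGram a b t' hr
  rw [← hN (t + 1) (by omega), ← hN (t + 1) (by omega), ← hN (t + 2) (by omega),
    ← hN t (by omega), ← Finset.sum_add_distrib, ← Finset.sum_add_distrib]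
  simp only [solS_succ_add_two a b dctrl _ s, solS_succ_add_two a b dctrl _ t]
  have hs := sum_range_a_mul_solS_shift a b t (by omega : s + 2 ≤ s + t + 3)
  have ht := sum_range_a_mul_solS_shift a b s (by omega : t + 2 ≤ s + t + 3)
  rw [← sub_eq_zero, ← Finset.sum_sub_distrib]
  calc _ = ∑ n ∈ Finset.range (s + t + 3),
        ((a n * solS a b dctrl n (s + 1) * solS a b dctrl (n + 1) (t + 1)
          - a (n + 1) * solS a b dctrl (n + 1) (s + 1) * solS a b dctrl (n + 2) (t + 1))
        - (a n * solS a b dctrl n (t + 1) * solS a b dctrl (n + 1) (s + 1)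
          - a (n + 1) * solS a b dctrl (n + 1) (t + 1) * solS a b dctrl (n + 2) (s + 1))) :=
        Finset.sum_congr rfl fun n _ => by ring
    _ = 0 := by simp only [Finset.sum_sub_distrib, hs, ht, sub_self]

end Gram

section ResponseSum

variable (a b : ℕ → ℝ)

/-- The right-hand side of the representation of `C^T`, written in the variables `s = T - i`,
`t = T - j`. -/
noncomputable def respSum (s t : ℕ) : ℝ :=
  ∑ k ∈ Finset.range (min s t), respVec a b (max s t - min s t + 2 * k)

theorem respSum_comm (s t : ℕ) : respSum a b s t = respSum a b t s := by
  rw [respSum, respSum, min_comm, max_comm]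

theorem respSum_of_le {s t : ℕ} (h : s ≤ t) :
    respSum a b s t = ∑ k ∈ Finset.range s, respVec a b (t - s + 2 * k) := by
  rw [respSum, min_eq_left h, max_eq_right h]

theorem sum_range_succ_respVec (e m : ℕ) :
    ∑ k ∈ Finset.range (m + 1), respVec a b (e + 2 * k)
      = ∑ k ∈ Finset.range m, respVec a b (e + 2 + 2 * k) + respVec a b e := by
  rw [Finset.sum_range_succ']
  congr 1
  exact Finset.sum_congr rfl fun k _ => by ring_nf

theorem respSum_wave (s t : ℕ) :
    respSum a b (s + 2) (t + 1) + respSum a b s (t + 1)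
      = respSum a b (s + 1) (t + 2) + respSum a b (s + 1) t := by
  wlog hst : s < t generalizing s t
  · obtain rfl | hts := (not_lt.mp hst).eq_or_lt
    · rw [respSum_comm a b (t + 2), respSum_comm a b t]
    · have := this t s hts
      rw [respSum_comm a b (t + 2), respSum_comm a b t, respSum_comm a b (t + 1) (s + 2),
        respSum_comm a b (t + 1) s] at this
      linarith
  obtain ⟨d, rfl⟩ : ∃ d, t = s + 1 + d := ⟨t - s - 1, by omega⟩
  rw [respSum_of_le a b (by omega : s + 2 ≤ s + 1 + d + 1),
    respSum_of_le a b (by omega : s ≤ s + 1 + d + 1),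
    respSum_of_le a b (by omega : s + 1 ≤ s + 1 + d + 2),
    respSum_of_le a b (by omega : s + 1 ≤ s + 1 + d),
    show s + 1 + d + 1 - (s + 2) = d by omega, show s + 1 + d + 1 - s = d + 2 by omega,
    show s + 1 + d + 2 - (s + 1) = d + 2 by omega, show s + 1 + d - (s + 1) = d by omega,
    sum_range_succ_respVec a b d (s + 1), sum_range_succ_respVec a b d s]
  ring

end ResponseSum

theorem waveGram_eq_respSum (a b : ℕ → ℝ) (ha0 : a 0 = 1) : waveGram a b = respSum a b := by
  have hu11 : solS a b dctrl 1 1 = 1 := by simpa [dctrl, ha0] using solS_succ_self a b dctrl 0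
  refine eq_of_discrete_wave (waveGram_wave a b) (respSum_wave a b)
    (fun t => by simp [waveGram, respSum]) (fun t => ?_)
    (fun s => by simp [waveGram, respSum, solS_succ_zero])
  cases t with
  | zero => simp [waveGram, respSum, solS_succ_zero]
  | succ t => simp [waveGram, respSum, respVec, hu11]

/-- `C^T` is positive definite and
`C^T_{ij} = Σ_{k=0}^{T-max(i,j)} r_{|i-j|+2k}` (1-based `i,j`), with `r_0 = 1`. -/
theorem connecting_operator_posdef_and_representation
    (a b : ℕ → ℝ) (ha0 : a 0 = 1) (hapos : ∀ n, 0 < a n) (T : ℕ) :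
    (CSemiMat a b T).PosDef ∧ respVec a b 0 = 1 ∧
      ∀ i j : Fin T,
        CSemiMat a b T i j
          = ∑ k ∈ Finset.range (T - max (i : ℕ) (j : ℕ)),
              respVec a b ((max (i : ℕ) (j : ℕ) - min (i : ℕ) (j : ℕ)) + 2 * k) := by
  refine ⟨CSemiMat_posDef a b (fun n => (hapos n).ne') T, (respVec_zero a b).trans ha0,
    fun i j => ?_⟩
  have hi := i.isLt
  have hj := j.isLt
  rw [CSemiMat_apply, waveGram_eq_respSum a b ha0, respSum,
    show min (T - i) (T - j) = T - max (i : ℕ) j by omega,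
    show max (T - i) (T - j) - (T - max (i : ℕ) j) = max (i : ℕ) j - min (i : ℕ) j by omega]
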